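/- (Dual orthogonality relation) With D, k_j = 2j+1, θ_n = 3 − 6n(n+1)/(D(D+2)), and u_j(θ_n) = ₄F₃[−j, j+1, −n, n+1; 1, D+2, −D; 1], for all 0 ≤ n, m ≤ D: Σ_{j=0}^D k_j u_j(θ_n) u_j(θ_m) = (D+1)² k_n^{−1} δ_{n,m}. -/

import Mathlib

/-! The vectors `(F4 D j n)_{j ≤ D}` are eigenvectors, with eigenvalues `θ_n`, of the tridiagonal
operator `tridiag a b c` of the three-term recurrence of the Racah polynomials `u_j`. That operator
is self-adjoint for the weights `k_j = 2j + 1`, so eigenvectors for distinct `θ_n` are orthogonal.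
As `F4 D j n` is symmetric in `j` and `n`, the same recurrence in `n` relates consecutive norms:
`k_{n+1} ‖u(θ_{n+1})‖² = k_n ‖u(θ_n)‖²`, and `‖u(θ_0)‖² = Σ_j k_j = (D + 1)²`.

The recurrence is checked on the expansion `F4 D j n = Σ_t R_j(t) P_n(t)` with
`P_n(t) = (-n)_t (n+1)_t`: multiplication by `θ_n` acts on the `P_n(t)` bidiagonally, and the
coefficients `R_j(t)` satisfy the matching contiguous relation in `j`. -/

/-- Pochhammer symbol `(a)_n = a(a+1)⋯(a+n-1)`. -/
noncomputable def poch (a : ℝ) (n : ℕ) : ℝ := ∏ k ∈ Finset.range n, (a + k)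

/-- The terminating hypergeometric sum
`₄F₃[−i, i+1, −j, j+1; 1, D+2, −D; 1] = Σ_{n=0}^{min(i,j)} …`. -/
noncomputable def F4 (D i j : ℕ) : ℝ :=
  ∑ n ∈ Finset.range (min i j + 1),
    (poch (-(i : ℝ)) n * poch ((i : ℝ) + 1) n * poch (-(j : ℝ)) n * poch ((j : ℝ) + 1) n) /
      (poch 1 n * poch ((D : ℝ) + 2) n * poch (-(D : ℝ)) n * (n.factorial : ℝ))

open Finset

section Tridiagonal

def tridiag (a b c u : ℕ → ℝ) (j : ℕ) : ℝ := c j * u (j - 1) + a j * u j + b j * u (j + 1)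

structure IsTridiagSelfAdjoint (D : ℕ) (b c k : ℕ → ℝ) : Prop where
  c_zero : c 0 = 0
  b_last : b D = 0
  weight_mul : ∀ j < D, k j * b j = k (j + 1) * c (j + 1)

variable {D : ℕ} {a b c k : ℕ → ℝ}

theorem IsTridiagSelfAdjoint.sum_tridiag_mul_comm (h : IsTridiagSelfAdjoint D b c k)
    (u v : ℕ → ℝ) :
    ∑ j ∈ range (D + 1), k j * tridiag a b c u j * v j
      = ∑ j ∈ range (D + 1), k j * tridiag a b c v j * u j := by
  have shift : ∀ w z : ℕ → ℝ, ∑ j ∈ range (D + 1), k j * c j * w (j - 1) * z j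
      = ∑ j ∈ range (D + 1), k j * b j * w j * z (j + 1) := fun w z => by
    rw [sum_range_succ', sum_range_succ, h.c_zero, h.b_last]
    simp only [mul_zero, zero_mul, add_zero]
    refine sum_congr rfl fun j hj => ?_
    rw [h.weight_mul j (mem_range.1 hj), Nat.add_sub_cancel]
  have expand : ∀ w z : ℕ → ℝ, ∑ j ∈ range (D + 1), k j * tridiag a b c w j * z j
      = ∑ j ∈ range (D + 1), k j * c j * w (j - 1) * z j
        + ∑ j ∈ range (D + 1), k j * a j * w j * z j
        + ∑ j ∈ range (D + 1), k j * b j * w (j + 1) * z j := fun w z => by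
    simp only [tridiag, ← sum_add_distrib]
    exact sum_congr rfl fun j _ => by ring
  rw [expand, expand, shift, shift]
  simp only [← sum_add_distrib]
  exact sum_congr rfl fun j _ => by ring

theorem IsTridiagSelfAdjoint.sum_mul_eq_zero_of_eigen (h : IsTridiagSelfAdjoint D b c k)
    {u v : ℕ → ℝ} {θ μ : ℝ} (hu : ∀ j ≤ D, tridiag a b c u j = θ * u j)
    (hv : ∀ j ≤ D, tridiag a b c v j = μ * v j) (hθμ : θ ≠ μ) :
    ∑ j ∈ range (D + 1), k j * u j * v j = 0 := by
  have eigen : ∀ (w z : ℕ → ℝ) (ν : ℝ), (∀ j ≤ D, tridiag a b c w j = ν * w j) →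
      ∑ j ∈ range (D + 1), k j * tridiag a b c w j * z j
        = ν * ∑ j ∈ range (D + 1), k j * w j * z j := fun w z ν hw => by
    rw [mul_sum]
    refine sum_congr rfl fun j hj => ?_
    rw [hw j (Nat.lt_succ_iff.1 (mem_range.1 hj))]
    ring
  have hsymm := h.sum_tridiag_mul_comm (a := a) u v
  rw [eigen u v θ hu, eigen v u μ hv] at hsymm
  have hvu : ∑ j ∈ range (D + 1), k j * v j * u j = ∑ j ∈ range (D + 1), k j * u j * v j :=
    sum_congr rfl fun j _ => by ring
  rw [hvu, ← sub_eq_zero, ← sub_mul] at hsymm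
  exact (mul_eq_zero.1 hsymm).resolve_left (sub_ne_zero.2 hθμ)

variable {φ : ℕ → ℕ → ℝ} {θ : ℕ → ℝ}

theorem IsTridiagSelfAdjoint.sum_kernel_mul_eq_zero (h : IsTridiagSelfAdjoint D b c k)
    (heig : ∀ n ≤ D, ∀ j ≤ D, tridiag a b c (fun i => φ i n) j = θ n * φ j n)
    (hθ : Set.InjOn θ (Set.Iic D)) {n m : ℕ} (hn : n ≤ D) (hm : m ≤ D) (hnm : n ≠ m) :
    ∑ j ∈ range (D + 1), k j * φ j n * φ j m = 0 :=
  h.sum_mul_eq_zero_of_eigen (heig n hn) (heig m hm) fun hθnm => hnm (hθ hn hm hθnm)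

theorem IsTridiagSelfAdjoint.weight_mul_sum_kernel_sq_succ (h : IsTridiagSelfAdjoint D b c k)
    (heig : ∀ n ≤ D, ∀ j ≤ D, tridiag a b c (fun i => φ i n) j = θ n * φ j n)
    (hθ : Set.InjOn θ (Set.Iic D)) (hφ : ∀ i j, φ i j = φ j i) (hb : ∀ n < D, b n ≠ 0)
    {n : ℕ} (hn : n < D) :
    k (n + 1) * ∑ j ∈ range (D + 1), k j * φ j (n + 1) * φ j (n + 1)
      = k n * ∑ j ∈ range (D + 1), k j * φ j n * φ j n := by
  set W : ℕ → ℕ → ℝ := fun p q => ∑ j ∈ range (D + 1), k j * φ j p * φ j q with hW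
  -- the recurrence in the second variable, paired against `φ · q`
  have hdual : ∀ p ≤ D, ∀ q, ∑ j ∈ range (D + 1), k j * θ j * φ j p * φ j q
      = c p * W (p - 1) q + a p * W p q + b p * W (p + 1) q := fun p hp q => by
    simp only [hW, mul_sum, ← sum_add_distrib]
    refine sum_congr rfl fun j hj => ?_
    have hrec := heig j (Nat.lt_succ_iff.1 (mem_range.1 hj)) p hp
    simp only [tridiag, hφ _ j] at hrec
    linear_combination -(k j * φ j q) * hrec
  have hzero : ∀ p ≤ D, ∀ q ≤ D, p ≠ q → W p q = 0 := fun p hp q hq hpq =>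
    h.sum_kernel_mul_eq_zero heig hθ hp hq hpq
  have hlow : ∑ j ∈ range (D + 1), k j * θ j * φ j n * φ j (n + 1)
      = b n * W (n + 1) (n + 1) := by
    rw [hdual n hn.le, hzero (n - 1) (by omega) (n + 1) hn (by omega),
      hzero n hn.le (n + 1) hn (by omega)]
    ring
  have hhigh : ∑ j ∈ range (D + 1), k j * θ j * φ j (n + 1) * φ j n = c (n + 1) * W n n := by
    rw [hdual (n + 1) hn, Nat.add_sub_cancel, hzero (n + 1) hn n hn.le (by omega)]
    rcases Nat.lt_or_eq_of_le (Nat.succ_le_of_lt hn) with hn2 | hn2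
    · rw [hzero (n + 1 + 1) hn2 n hn.le (by omega)]
      ring
    · rw [show n + 1 = D from hn2, h.b_last]
      ring
  have hswap : ∑ j ∈ range (D + 1), k j * θ j * φ j n * φ j (n + 1)
      = ∑ j ∈ range (D + 1), k j * θ j * φ j (n + 1) * φ j n :=
    sum_congr rfl fun j _ => by ring
  rw [hswap, hhigh] at hlow
  show k (n + 1) * W (n + 1) (n + 1) = k n * W n n
  refine mul_left_cancel₀ (hb n hn) ?_
  linear_combination -k (n + 1) * hlow - W n n * h.weight_mul n hn

theorem IsTridiagSelfAdjoint.weight_mul_sum_kernel_sq (h : IsTridiagSelfAdjoint D b c k)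
    (heig : ∀ n ≤ D, ∀ j ≤ D, tridiag a b c (fun i => φ i n) j = θ n * φ j n)
    (hθ : Set.InjOn θ (Set.Iic D)) (hφ : ∀ i j, φ i j = φ j i) (hb : ∀ n < D, b n ≠ 0)
    {n : ℕ} (hn : n ≤ D) :
    k n * ∑ j ∈ range (D + 1), k j * φ j n * φ j n
      = k 0 * ∑ j ∈ range (D + 1), k j * φ j 0 * φ j 0 := by
  induction n with
  | zero => rfl
  | succ n ih => rw [h.weight_mul_sum_kernel_sq_succ heig hθ hφ hb hn, ih (by omega)]

end Tridiagonal

theorem poch_succ (a : ℝ) (n : ℕ) : poch a (n + 1) = poch a n * (a + n) :=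
  prod_range_succ _ _

noncomputable def pochPair (x : ℝ) (t : ℕ) : ℝ := poch (-x) t * poch (x + 1) t

theorem pochPair_zero (x : ℝ) : pochPair x 0 = 1 := by simp [pochPair, poch]

theorem pochPair_succ (x : ℝ) (t : ℕ) :
    pochPair x (t + 1) = pochPair x t * ((t - x) * (t + x + 1)) := by
  rw [pochPair, pochPair, poch_succ, poch_succ]
  ring

theorem pochPair_neg_sub_one (x : ℝ) (t : ℕ) : pochPair (-x - 1) t = pochPair x t := by
  rw [pochPair, pochPair, mul_comm]
  ring_nf

theorem pochPair_sub_one_succ (x : ℝ) (s : ℕ) :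
    pochPair (x - 1) (s + 1) = -(pochPair x s * ((s - x) * (s - x + 1))) := by
  induction s with
  | zero => rw [pochPair_succ, pochPair_zero, pochPair_zero, Nat.cast_zero]; ring
  | succ s ih =>
    rw [pochPair_succ, ih, pochPair_succ]
    push_cast
    ring

theorem pochPair_add_one_succ (x : ℝ) (s : ℕ) :
    pochPair (x + 1) (s + 1) = -(pochPair x s * ((s + x + 1) * (s + x + 2))) := by
  rw [← pochPair_neg_sub_one x, ← pochPair_neg_sub_one (x + 1),
    show -(x + 1) - 1 = (-x - 1) - 1 by ring, pochPair_sub_one_succ]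
  ring

theorem pochPair_natCast_of_lt {n t : ℕ} (h : n < t) : pochPair n t = 0 := by
  rw [pochPair, poch, prod_eq_zero (mem_range.2 h) (by simp), zero_mul]

noncomputable def racahDen (D t : ℕ) : ℝ :=
  poch 1 t * poch ((D : ℝ) + 2) t * poch (-(D : ℝ)) t * (t.factorial : ℝ)

theorem racahDen_zero (D : ℕ) : racahDen D 0 = 1 := by simp [racahDen, poch]

theorem racahDen_succ (D t : ℕ) :
    racahDen D (t + 1) = racahDen D t * ((t + 1) ^ 2 * (D + 2 + t) * (t - D)) := by
  rw [racahDen, racahDen, poch_succ, poch_succ, poch_succ, Nat.factorial_succ]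
  push_cast
  ring

theorem racahDen_ne_zero {D t : ℕ} (ht : t ≤ D) : racahDen D t ≠ 0 := by
  induction t with
  | zero => rw [racahDen_zero]; exact one_ne_zero
  | succ t ih =>
    have htD : (t : ℝ) < D := by exact_mod_cast ht
    rw [racahDen_succ]
    exact mul_ne_zero (ih (by omega)) (by
      apply mul_ne_zero (mul_ne_zero (by positivity) (by positivity))
      linarith)

noncomputable def racahCoef (D : ℕ) (x : ℝ) (t : ℕ) : ℝ := pochPair x t / racahDen D t

theorem racahCoef_zero (D : ℕ) (x : ℝ) : racahCoef D x 0 = 1 := by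
  rw [racahCoef, pochPair_zero, racahDen_zero, div_one]

theorem F4_eq_sum_racahCoef (D j : ℕ) {n : ℕ} (hn : n ≤ D) :
    F4 D j n = ∑ t ∈ range (D + 1), racahCoef D j t * pochPair n t := by
  have hmin : F4 D j n = ∑ t ∈ range (min j n + 1), racahCoef D j t * pochPair n t :=
    sum_congr rfl fun t _ => by rw [racahCoef, pochPair, pochPair, racahDen]; ring
  rw [hmin]
  refine sum_subset (fun t ht => ?_) (fun t _ ht => ?_)
  · simp only [mem_range] at ht ⊢
    omega
  · simp only [mem_range, not_lt] at ht
    rcases le_total j n with hjn | hnj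
    · rw [racahCoef, pochPair_natCast_of_lt (by omega : j < t), zero_div, zero_mul]
    · rw [pochPair_natCast_of_lt (by omega : n < t), mul_zero]

theorem F4_comm (D i j : ℕ) : F4 D i j = F4 D j i := by
  rw [F4, F4, min_comm]
  exact sum_congr rfl fun t _ => by ring

theorem F4_zero_right (D j : ℕ) : F4 D j 0 = 1 := by simp [F4, poch]

section RacahCoefficients

variable (D : ℕ)

noncomputable def racahA (j : ℕ) : ℝ := 3 * j * (j + 1) / (D * (D + 2))

noncomputable def racahB (j : ℕ) : ℝ :=
  3 * (j + 1) * (D + 2 + j) * (D - j) / (D * (D + 2) * (2 * j + 1))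

noncomputable def racahC (j : ℕ) : ℝ :=
  3 * j * (D + 1 + j) * (D + 1 - j) / (D * (D + 2) * (2 * j + 1))

noncomputable def racahTheta (n : ℕ) : ℝ := 3 - 6 * n * (n + 1) / (D * (D + 2))

theorem isTridiagSelfAdjoint_racah :
    IsTridiagSelfAdjoint D (racahB D) (racahC D) (fun j => 2 * (j : ℝ) + 1) where
  c_zero := by simp [racahC]
  b_last := by simp [racahB]
  weight_mul j _ := by
    simp only [racahB, racahC]
    push_cast
    field_simp
    ring

variable {D}

theorem racahB_ne_zero (hD : 0 < D) {n : ℕ} (hn : n < D) : racahB D n ≠ 0 := by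
  have hnD : (n : ℝ) < D := by exact_mod_cast hn
  have hD' : (0 : ℝ) < D := by exact_mod_cast hD
  rw [racahB]
  have : (0 : ℝ) < D - n := by linarith
  positivity

theorem racahTheta_injective (hD : 0 < D) : Function.Injective (racahTheta D) := by
  intro n m h
  have hD' : (D : ℝ) ≠ 0 := by positivity
  have hsq : (n : ℝ) * (n + 1) = m * (m + 1) := by
    simp only [racahTheta] at h
    field_simp at h
    linarith
  have hmono : StrictMono fun x : ℕ => x * (x + 1) := fun x y hxy =>
    Nat.mul_lt_mul'' hxy (by omega)
  exact hmono.injective (by exact_mod_cast hsq)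

theorem racahTheta_mul_pochPair (n t : ℕ) :
    racahTheta D n * pochPair n t
      = racahTheta D t * pochPair n t + 6 / (D * (D + 2)) * pochPair n (t + 1) := by
  rw [racahTheta, racahTheta, pochPair_succ]
  ring

theorem racahCoef_contiguous_zero (hD : 0 < D) (j : ℕ) :
    racahC D j * racahCoef D (j - 1) 0 + racahA D j * racahCoef D j 0
      + racahB D j * racahCoef D (j + 1) 0 = racahTheta D 0 * racahCoef D j 0 := by
  have hD' : (D : ℝ) ≠ 0 := by positivity
  simp only [racahCoef_zero, mul_one, racahA, racahB, racahC, racahTheta]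
  push_cast
  field_simp
  ring

theorem racahCoef_contiguous_succ (hD : 0 < D) (j : ℕ) {s : ℕ} (hs : s < D) :
    racahC D j * racahCoef D (j - 1) (s + 1) + racahA D j * racahCoef D j (s + 1)
      + racahB D j * racahCoef D (j + 1) (s + 1)
      = racahTheta D (s + 1) * racahCoef D j (s + 1) + 6 / (D * (D + 2)) * racahCoef D j s := by
  have hD' : (D : ℝ) ≠ 0 := by positivity
  have hsD : (s : ℝ) - D ≠ 0 := sub_ne_zero.2 (by exact_mod_cast hs.ne)
  have hden := racahDen_ne_zero hs.le
  simp only [racahCoef]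
  rw [pochPair_sub_one_succ, pochPair_add_one_succ, pochPair_succ, racahDen_succ]
  simp only [racahA, racahB, racahC, racahTheta]
  push_cast
  field_simp
  ring

end RacahCoefficients

theorem tridiag_F4_eq_racahTheta_mul {D : ℕ} (hD : 0 < D) {j n : ℕ} (hj : j ≤ D)
    (hn : n ≤ D) :
    tridiag (racahA D) (racahB D) (racahC D) (fun i => F4 D i n) j = racahTheta D n * F4 D j n := by
  set R := racahCoef D
  set P : ℕ → ℝ := pochPair n
  set κ : ℝ := 6 / (D * (D + 2))
  have hprev : racahC D j * F4 D (j - 1) n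
      = racahC D j * ∑ t ∈ range (D + 1), R ((j : ℝ) - 1) t * P t := by
    rcases Nat.eq_zero_or_pos j with rfl | hj0
    · simp [racahC]
    · rw [F4_eq_sum_racahCoef _ _ hn, Nat.cast_sub hj0, Nat.cast_one]
  have hnext : F4 D (j + 1) n = ∑ t ∈ range (D + 1), R ((j : ℝ) + 1) t * P t := by
    rw [F4_eq_sum_racahCoef _ _ hn, Nat.cast_succ]
  have hlhs : ∑ t ∈ range (D + 1), (racahC D j * R ((j : ℝ) - 1) t + racahA D j * R j t
      + racahB D j * R ((j : ℝ) + 1) t) * P t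
      = ∑ s ∈ range D, (racahTheta D (s + 1) * R j (s + 1) + κ * R j s) * P (s + 1)
        + racahTheta D 0 * R j 0 * P 0 := by
    rw [sum_range_succ', racahCoef_contiguous_zero hD]
    congr 1
    exact sum_congr rfl fun s hs => by
      rw [racahCoef_contiguous_succ hD j (mem_range.1 hs)]
  have hrhs : ∑ t ∈ range (D + 1), R j t * (racahTheta D t * P t + κ * P (t + 1))
      = ∑ s ∈ range D, (racahTheta D (s + 1) * R j (s + 1) + κ * R j s) * P (s + 1)
        + racahTheta D 0 * R j 0 * P 0 := by
    simp only [mul_add, sum_add_distrib]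
    rw [sum_range_succ', sum_range_succ (fun t => R j t * (κ * P (t + 1))),
      show P (D + 1) = 0 from pochPair_natCast_of_lt (by omega), mul_zero, mul_zero, add_zero,
      add_right_comm, ← sum_add_distrib]
    congr 1
    · exact sum_congr rfl fun s _ => by ring
    · ring
  have htheta : racahTheta D n * ∑ t ∈ range (D + 1), R j t * P t
      = ∑ t ∈ range (D + 1), R j t * (racahTheta D t * P t + κ * P (t + 1)) := by
    rw [mul_sum]
    exact sum_congr rfl fun t _ => by rw [← racahTheta_mul_pochPair]; ring
  rw [tridiag, hprev, hnext, F4_eq_sum_racahCoef _ _ hn, htheta, hrhs, ← hlhs]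
  simp only [mul_sum, ← sum_add_distrib]
  exact sum_congr rfl fun t _ => by ring

theorem sum_range_two_mul_add_one (N : ℕ) :
    ∑ j ∈ range N, (2 * (j : ℝ) + 1) = (N : ℝ) ^ 2 := by
  induction N with
  | zero => simp
  | succ N ih =>
    rw [sum_range_succ, ih]
    push_cast
    ring

theorem dual_orthogonality (D : ℕ) (hD : 0 < D) (n m : ℕ) (hn : n ≤ D) (hm : m ≤ D) :
    ∑ j ∈ Finset.range (D + 1), (2 * (j : ℝ) + 1) * F4 D j n * F4 D j m
      = ((D : ℝ) + 1) ^ 2 * (2 * (n : ℝ) + 1)⁻¹ * (if n = m then 1 else 0) := by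
  have hsa := isTridiagSelfAdjoint_racah D
  have heig : ∀ n ≤ D, ∀ j ≤ D,
      tridiag (racahA D) (racahB D) (racahC D) (fun i => F4 D i n) j
        = racahTheta D n * F4 D j n := fun _ hn _ hj => tridiag_F4_eq_racahTheta_mul hD hj hn
  have hθ : Set.InjOn (racahTheta D) (Set.Iic D) := (racahTheta_injective hD).injOn
  split_ifs with hnm
  · subst hnm
    have hnorm := hsa.weight_mul_sum_kernel_sq heig hθ (F4_comm D)
      (fun _ => racahB_ne_zero hD) hn
    simp only [F4_zero_right, mul_one, Nat.cast_zero, mul_zero, zero_add, one_mul,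
      sum_range_two_mul_add_one] at hnorm
    rw [mul_one, eq_mul_inv_iff_mul_eq₀ (by positivity), mul_comm, hnorm]
    push_cast
    ring
  · rw [mul_zero]
    exact hsa.sum_kernel_mul_eq_zero heig hθ hn hm hnm
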